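/- Let α > 0 and ω > 0, and define u(x,t) = 2α√ω (√(α²+ω) + √ω) e^{x√ω + iωt} / ( α²(e^{2x√ω} − 1) + 2√ω (√(α²+ω) + √ω) e^{2x√ω} ). Then for all t ∈ ℝ: u(0,t) = α e^{iωt} and ∂_x u(0,t) = −α√(ω + α²) e^{iωt}. -/

import Mathlib

open MeasureTheory Set

noncomputable section

/-- The explicit function
`u(x,t) = 2α√ω(√(α²+ω)+√ω) e^{x√ω + iωt} / (α²(e^{2x√ω}-1) + 2√ω(√(α²+ω)+√ω)e^{2x√ω})`. -/
def uExact (α ω : ℝ) : ℝ → ℝ → ℂ := fun x t =>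
  ((2 * α * Real.sqrt ω * (Real.sqrt (α ^ 2 + ω) + Real.sqrt ω) : ℝ) : ℂ) *
      Complex.exp ((x * Real.sqrt ω : ℝ) + Complex.I * ω * t) /
    (((α ^ 2 : ℝ) : ℂ) * (Complex.exp ((2 * x * Real.sqrt ω : ℝ) : ℂ) - 1) +
      ((2 * Real.sqrt ω * (Real.sqrt (α ^ 2 + ω) + Real.sqrt ω) : ℝ) : ℂ) *
        Complex.exp ((2 * x * Real.sqrt ω : ℝ) : ℂ))

/-! The time dependence of `u` is the factor `e^{iωt}`; the remaining spatial factor has the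
form `c e^{sx} / (a(e^{2sx} - 1) + b e^{2sx})`, which equals `c / b` at `0` and, by the quotient
rule, has derivative `-c s (2a + b) / b²` there. With `s = √ω`, `a = α²`, `b = 2s(√(α²+ω) + s)`,
`c = αb`, both boundary values reduce to `(√(α²+ω))² = α² + s²`. -/

def spatialProfile (a b c s : ℂ) (x : ℝ) : ℂ :=
  c * Complex.exp (s * x) / (a * (Complex.exp (2 * s * x) - 1) + b * Complex.exp (2 * s * x))

lemma hasDerivAt_cexp_const_mul_ofReal (s : ℂ) (x : ℝ) :
    HasDerivAt (fun y : ℝ => Complex.exp (s * y)) (s * Complex.exp (s * x)) x := by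
  simpa [mul_comm] using (((hasDerivAt_id x).ofReal_comp).const_mul s).cexp

lemma spatialProfile_zero (a b c s : ℂ) : spatialProfile a b c s 0 = c / b := by
  simp [spatialProfile]

lemma hasDerivAt_spatialProfile_zero (a c s : ℂ) {b : ℂ} (hb : b ≠ 0) :
    HasDerivAt (spatialProfile a b c s) (-(c * s * (2 * a + b)) / b ^ 2) 0 := by
  have hnum := (hasDerivAt_cexp_const_mul_ofReal s 0).const_mul c
  have hexp := hasDerivAt_cexp_const_mul_ofReal (2 * s) 0
  have hden := ((hexp.sub_const 1).const_mul a).add (hexp.const_mul b)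
  refine (hnum.div hden (by simpa using hb)).congr_deriv ?_
  simp only [Pi.add_apply, Complex.ofReal_zero, mul_zero, Complex.exp_zero]
  ring

lemma uExact_eq_mul_spatialProfile (α ω x t : ℝ) :
    uExact α ω x t = Complex.exp (Complex.I * ω * t) *
      spatialProfile (α ^ 2) (2 * √ω * (√(α ^ 2 + ω) + √ω))
        (α * (2 * √ω * (√(α ^ 2 + ω) + √ω))) √ω x := by
  simp only [uExact, spatialProfile, Complex.exp_add]
  push_cast
  ring_nf

theorem uExact_boundary_values_general (α ω : ℝ) (hω : 0 < ω) :
    ∀ t : ℝ,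
      uExact α ω 0 t = (α : ℂ) * Complex.exp (Complex.I * ω * t) ∧
      deriv (fun x => uExact α ω x t) 0 =
        -(α : ℂ) * (Real.sqrt (ω + α ^ 2) : ℂ) * Complex.exp (Complex.I * ω * t) := by
  intro t
  set s := √ω
  set q := √(α ^ 2 + ω)
  have hs : 0 < s := Real.sqrt_pos.2 hω
  have hqs : (q : ℂ) ^ 2 = α ^ 2 + s ^ 2 := by
    exact_mod_cast (Real.sq_sqrt (by positivity : 0 ≤ α ^ 2 + ω)).trans
      (by rw [Real.sq_sqrt hω.le])
  have hB : (2 * s * (q + s) : ℂ) ≠ 0 := by exact_mod_cast (by positivity : 2 * s * (q + s) ≠ 0)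
  have hu : (fun x => uExact α ω x t) = fun x => Complex.exp (Complex.I * ω * t) *
      spatialProfile (α ^ 2) (2 * s * (q + s)) (α * (2 * s * (q + s))) s x :=
    funext fun x => uExact_eq_mul_spatialProfile α ω x t
  refine ⟨?_, ?_⟩
  · rw [uExact_eq_mul_spatialProfile, spatialProfile_zero, mul_div_cancel_right₀ _ hB, mul_comm]
  · rw [hu, ((hasDerivAt_spatialProfile_zero _ _ _ hB).const_mul _).deriv, add_comm ω,
      mul_div_assoc', div_eq_iff (pow_ne_zero 2 hB)]
    linear_combination (4 * α * s ^ 2 * (q + s) * Complex.exp (Complex.I * ω * t)) * hqs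

/-- For `α > 0`, `ω > 0`, the explicit function `uExact α ω` has boundary values
`u(0,t) = α e^{iωt}` and `∂ₓu(0,t) = -α√(ω+α²) e^{iωt}` for all `t ∈ ℝ`. -/
theorem uExact_boundary_values (α ω : ℝ) (hα : 0 < α) (hω : 0 < ω) :
    ∀ t : ℝ,
      uExact α ω 0 t = (α : ℂ) * Complex.exp (Complex.I * ω * t) ∧
      deriv (fun x => uExact α ω x t) 0 =
        -(α : ℂ) * (Real.sqrt (ω + α ^ 2) : ℂ) * Complex.exp (Complex.I * ω * t) :=
  uExact_boundary_values_general α ω hω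

end
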